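/- Let X be a topological space, (f_λ)_{λ∈Λ} a net in F(X) and f ∈ F(X). If f is weak level continuous and (f_λ) E-converges to f, then (f_λ) L-converges to f. -/

import Mathlib

open Set Topology
open scoped ENNReal Pointwise

noncomputable section

/-- Kuratowski upper limit of a net of sets indexed by a relation `r`. -/
def KLimsup {X Λ : Type*} [TopologicalSpace X] (r : Λ → Λ → Prop) (A : Λ → Set X) : Set X :=
  {x | ∀ U ∈ nhds x, ∀ μ : Λ, ∃ l : Λ, r μ l ∧ (A l ∩ U).Nonempty}

/-- Kuratowski lower limit of a net of sets indexed by a relation `r`. -/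
def KLiminf {X Λ : Type*} [TopologicalSpace X] (r : Λ → Λ → Prop) (A : Λ → Set X) : Set X :=
  {x | ∀ U ∈ nhds x, ∃ μ : Λ, ∀ l : Λ, r μ l → (A l ∩ U).Nonempty}

/-- Strict α-level set. -/
def lset {X : Type*} (f : X → ℝ≥0∞) (α : ℝ) : Set X := {x | f x < ENNReal.ofReal α}

/-- Non-strict α-level set. -/
def Lset {X : Type*} (f : X → ℝ≥0∞) (α : ℝ) : Set X := {x | f x ≤ ENNReal.ofReal α}

/-- A level function: all strict level sets (for real α > 0) are nonempty. -/
def IsLevelFun {X : Type*} (f : X → ℝ≥0∞) : Prop := ∀ α : ℝ, 0 < α → (lset f α).Nonempty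

/-- Epigraph E(f) ⊆ X × ℝ. -/
def Epi {X : Type*} (f : X → ℝ≥0∞) : Set (X × ℝ) :=
  {p | 0 < p.2 ∧ f p.1 ≤ ENNReal.ofReal p.2}

/-- Strict epigraph e(f) ⊆ X × ℝ. -/
def epiStrict {X : Type*} (f : X → ℝ≥0∞) : Set (X × ℝ) :=
  {p | 0 < p.2 ∧ f p.1 < ENNReal.ofReal p.2}

/-- A set is robust if its closure equals the closure of its interior. -/
def Robust {Y : Type*} [TopologicalSpace Y] (A : Set Y) : Prop :=
  closure A = closure (interior A)

/-- Weak level convergence of a net of level functions. -/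
def LConvergesTo {X Λ : Type*} [TopologicalSpace X] (r : Λ → Λ → Prop)
    (F : Λ → X → ℝ≥0∞) (f : X → ℝ≥0∞) : Prop :=
  ∀ α : ℝ, 0 < α →
    KLimsup r (fun l => Lset (F l) α) ⊆ closure (Lset f α) ∧
    closure (Lset f α) ⊆ KLiminf r (fun l => Lset (F l) α)

/-- Weak epigraph convergence of a net of level functions. -/
def EConvergesTo {X Λ : Type*} [TopologicalSpace X] (r : Λ → Λ → Prop)
    (F : Λ → X → ℝ≥0∞) (f : X → ℝ≥0∞) : Prop :=
  KLimsup r (fun l => Epi (F l)) ⊆ closure (Epi f) ∧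
  closure (Epi f) ⊆ KLiminf r (fun l => Epi (F l))

/-!
Both halves of L-convergence are read off horizontal slices of the epigraphs. A limit point of
the sublevel sets `L_α f_λ` lifts to the limit point `(x, α + ε/2)` of the epigraphs, which lies
in the closure of `E(f)`; projecting back, `x ∈ cl ℓ_{α+ε} f` for every `ε > 0`, and weak level
continuity turns this into `x ∈ cl ℓ_α f`. Conversely a point `y` with `f y < α` has a point
`(y, β)`, `β < α`, in `E(f)`, so the epigraphs of `f_λ` eventually meet every box around it, and
their slices at height `α` eventually meet every neighbourhood of `y`. Since the lower limit of
a net of sets is closed and weak level continuity gives `cl L_α f = cl ℓ_α f`, this suffices.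
-/

section LevelSets

variable {X : Type*} {f : X → ℝ≥0∞} {α β : ℝ}

theorem lset_subset_Lset : lset f α ⊆ Lset f α :=
  fun x hx => show f x ≤ _ from le_of_lt hx

theorem Lset_subset_lset_of_lt (hβ : 0 < β) (hαβ : α < β) : Lset f α ⊆ lset f β :=
  fun _ hx => hx.trans_lt ((ENNReal.ofReal_lt_ofReal_iff hβ).2 hαβ)

theorem exists_lt_mk_mem_Epi {x : X} (hx : x ∈ lset f α) : ∃ β < α, (x, β) ∈ Epi f := by
  obtain ⟨β, -, hxβ, hβα⟩ := ENNReal.lt_iff_exists_real_btwn.1 hx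
  refine ⟨β, (ENNReal.ofReal_lt_ofReal_iff'.1 hβα).1, ?_, hxβ.le⟩
  exact ENNReal.ofReal_pos.1 (pos_of_gt hxβ)

end LevelSets

section KuratowskiLimits

variable {X Λ : Type*} [TopologicalSpace X] {r : Λ → Λ → Prop}

theorem isClosed_KLiminf (A : Λ → Set X) : IsClosed (KLiminf r A) := by
  refine isClosed_of_closure_subset fun x hx U hU => ?_
  obtain ⟨O, hOU, hO, hxO⟩ := mem_nhds_iff.1 hU
  obtain ⟨y, hyO, hy⟩ := mem_closure_iff_nhds.1 hx O (hO.mem_nhds hxO)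
  obtain ⟨μ, hμ⟩ := hy O (hO.mem_nhds hyO)
  exact ⟨μ, fun l hl => (hμ l hl).mono (inter_subset_inter_right _ hOU)⟩

variable {F : Λ → X → ℝ≥0∞} {f : X → ℝ≥0∞} {x : X} {α β γ : ℝ}

theorem mk_mem_KLimsup_Epi (hx : x ∈ KLimsup r fun l => Lset (F l) α) (hβ : 0 < β)
    (hαβ : α ≤ β) : (x, β) ∈ KLimsup r fun l => Epi (F l) := by
  intro W hW μ
  rw [nhds_prod_eq, Filter.mem_prod_iff] at hW
  obtain ⟨U, hU, V, hV, hUV⟩ := hW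
  obtain ⟨l, hl, y, hyF, hyU⟩ := hx U hU μ
  exact ⟨l, hl, (y, β), ⟨hβ, hyF.trans (ENNReal.ofReal_le_ofReal hαβ)⟩,
    hUV ⟨hyU, mem_of_mem_nhds hV⟩⟩

theorem mem_closure_lset_of_mk_mem_closure_Epi (hx : (x, β) ∈ closure (Epi f)) (hβγ : β < γ) :
    x ∈ closure (lset f γ) := by
  refine mem_closure_iff_nhds.2 fun U hU => ?_
  obtain ⟨⟨y, δ⟩, ⟨hyU, hδγ⟩, hδ, hyδ⟩ :=
    mem_closure_iff_nhds.1 hx _ (prod_mem_nhds hU (Iio_mem_nhds hβγ))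
  exact ⟨y, hyU, Lset_subset_lset_of_lt (hδ.trans hδγ) hδγ hyδ⟩

theorem mem_KLiminf_Lset_of_mk_mem_KLiminf_Epi (hy : (x, β) ∈ KLiminf r fun l => Epi (F l))
    (hβα : β < α) : x ∈ KLiminf r fun l => Lset (F l) α := by
  intro U hU
  obtain ⟨μ, hμ⟩ := hy _ (prod_mem_nhds hU (Iio_mem_nhds hβα))
  refine ⟨μ, fun l hl => ?_⟩
  obtain ⟨⟨z, δ⟩, ⟨-, hzδ⟩, hzU, hδα⟩ := hμ l hl
  exact ⟨z, hzδ.trans (ENNReal.ofReal_le_ofReal (le_of_lt hδα)), hzU⟩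

theorem KLimsup_Lset_subset_closure_lset
    (hsup : (KLimsup r fun l => Epi (F l)) ⊆ closure (Epi f)) (hα : 0 ≤ α) (hαγ : α < γ) :
    (KLimsup r fun l => Lset (F l) α) ⊆ closure (lset f γ) := fun _ hx =>
  mem_closure_lset_of_mk_mem_closure_Epi
    (hsup (mk_mem_KLimsup_Epi (β := (α + γ) / 2) hx (by linarith) (by linarith))) (by linarith)

theorem closure_lset_subset_KLiminf_Lset
    (hinf : closure (Epi f) ⊆ KLiminf r fun l => Epi (F l)) :
    closure (lset f α) ⊆ KLiminf r fun l => Lset (F l) α := by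
  refine (isClosed_KLiminf _).closure_subset_iff.2 fun y hy => ?_
  obtain ⟨β, hβα, hyβ⟩ := exists_lt_mk_mem_Epi hy
  exact mem_KLiminf_Lset_of_mk_mem_KLiminf_Epi (hinf (subset_closure hyβ)) hβα

end KuratowskiLimits

theorem stmt8_general {X Λ : Type*} [TopologicalSpace X] [Preorder Λ]
    (F : Λ → X → ℝ≥0∞)
    (f : X → ℝ≥0∞)
    (hcont : ∀ α : ℝ, 0 < α →
      (⋂ ε > (0 : ℝ), closure (lset f (α + ε))) = closure (lset f α))
    (h : EConvergesTo (· ≤ · : Λ → Λ → Prop) F f) :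
    LConvergesTo (· ≤ · : Λ → Λ → Prop) F f := by
  obtain ⟨hsup, hinf⟩ := h
  intro α hα
  have hclosure : closure (Lset f α) = closure (lset f α) := by
    refine (closure_mono lset_subset_Lset).antisymm' ?_
    rw [← hcont α hα]
    exact subset_iInter₂ fun ε hε =>
      closure_mono (Lset_subset_lset_of_lt (by linarith) (by linarith))
  refine ⟨fun x hx => ?_, hclosure ▸ closure_lset_subset_KLiminf_Lset hinf⟩
  rw [hclosure, ← hcont α hα]
  exact mem_iInter₂.2 fun ε hε => KLimsup_Lset_subset_closure_lset hsup hα.le (by linarith) hx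

/-- if f is weak level continuous, E-convergence implies L-convergence. -/
theorem stmt8 {X Λ : Type*} [TopologicalSpace X] [Preorder Λ] [Nonempty Λ]
    [IsDirected Λ (· ≤ ·)] (F : Λ → X → ℝ≥0∞) (hF : ∀ l, IsLevelFun (F l))
    (f : X → ℝ≥0∞) (hf : IsLevelFun f)
    (hcont : ∀ α : ℝ, 0 < α →
      (⋂ ε > (0 : ℝ), closure (lset f (α + ε))) = closure (lset f α))
    (h : EConvergesTo (· ≤ · : Λ → Λ → Prop) F f) :
    LConvergesTo (· ≤ · : Λ → Λ → Prop) F f :=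
  stmt8_general F f hcont h
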